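/- Let W₁: ℝ → [0,+∞] be proper, convex, lower semicontinuous with W₁(0) = 0, and suppose lim_{|s|→∞} W₁(s)/s² = +∞. For λ > 0, let W_{1,λ}(r) = inf_{s∈ℝ} { (1/(2λ))|r−s|² + W₁(s) } be the Moreau–Yosida regularization. Then for every M > 0 there exist B_M ∈ ℝ and λ_M > 0 such that for all λ ∈ (0, λ_M) and all r ∈ ℝ, W_{1,λ}(r) ≥ M r² + B_M. -/

import Mathlib

/- Moreau--Yosida regularization of an extended-real-valued potential. -/
noncomputable def moreauYosida (W₁ : ℝ → EReal) (lam : ℝ) : ℝ → EReal := fun r =>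
  ⨅ s : ℝ, (((1 / (2 * lam)) * (r - s) ^ 2 : ℝ) : EReal) + W₁ s

/- STATEMENT 3: if W₁ is proper, convex, lsc, nonnegative with W₁(0) = 0 and has
superquadratic growth, then for every M > 0 there are B_M ∈ ℝ and λ_M > 0 such that
W_{1,λ}(r) ≥ M r² + B_M for all λ ∈ (0, λ_M) and all r ∈ ℝ. -/
theorem moreauYosida_superquadratic_lower_bound (W₁ : ℝ → EReal)
    (hproper : ∃ s, W₁ s ≠ ⊤)
    (hconv : ∀ x y a b : ℝ, 0 ≤ a → 0 ≤ b → a + b = 1 →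
      W₁ (a * x + b * y) ≤ (a : EReal) * W₁ x + (b : EReal) * W₁ y)
    (hlsc : LowerSemicontinuous W₁)
    (hzero : W₁ 0 = 0)
    (hnonneg : ∀ s, 0 ≤ W₁ s)
    (hsuper : ∀ M : ℝ, ∃ R : ℝ, ∀ s : ℝ, R ≤ |s| → ((M * s ^ 2 : ℝ) : EReal) ≤ W₁ s) :
    ∀ M : ℝ, 0 < M → ∃ (B_M lam_M : ℝ), 0 < lam_M ∧
      ∀ lam ∈ Set.Ioo (0 : ℝ) lam_M, ∀ r : ℝ,
        ((M * r ^ 2 + B_M : ℝ) : EReal) ≤ moreauYosida W₁ lam r := by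
  intro M hM
  obtain ⟨R, hR⟩ := hsuper (4 * M)
  refine ⟨-(4 * M * R ^ 2), 1 / (8 * M), by positivity, ?_⟩
  rintro lam ⟨hl0, hl1⟩ r
  have h2l : 4 * M ≤ 1 / (2 * lam) := by
    rw [le_div_iff₀ (by positivity)]
    rw [lt_div_iff₀ (by positivity)] at hl1
    nlinarith
  refine le_iInf fun s => ?_
  rcases le_or_gt R |s| with hs | hs
  · calc ((M * r ^ 2 + -(4 * M * R ^ 2) : ℝ) : EReal)
        ≤ ((1 / (2 * lam) * (r - s) ^ 2 : ℝ) : EReal) + ((4 * M * s ^ 2 : ℝ) : EReal) := by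
          rw [← EReal.coe_add, EReal.coe_le_coe_iff]
          nlinarith [sq_nonneg (r - 2 * s), sq_nonneg R, sq_nonneg (r - s), sq_nonneg r]
      _ ≤ _ := add_le_add_right (hR s hs) _
  · have hs2 : s ^ 2 ≤ R ^ 2 := by nlinarith [abs_nonneg s, sq_abs s]
    calc ((M * r ^ 2 + -(4 * M * R ^ 2) : ℝ) : EReal)
        ≤ ((1 / (2 * lam) * (r - s) ^ 2 : ℝ) : EReal) := by
          rw [EReal.coe_le_coe_iff]
          nlinarith [sq_nonneg (r - 2 * s), sq_nonneg (r - s), sq_nonneg r]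
      _ = _ + 0 := (add_zero _).symm
      _ ≤ _ + W₁ s := add_le_add_right (hnonneg s) _
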